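/- The function (U, V) ↦ ‖UᵀU − VᵀV‖_F + ‖U‖_F² + ‖V‖_F² is convex on ℝ^{n₁×r} × ℝ^{n₂×r}; that is, the balancing regularizer φ(U, V) = ‖UᵀU − VᵀV‖_F is weakly convex with parameter 2 (with respect to the norm ‖(U,V)‖ = √(‖U‖_F² + ‖V‖_F²)). -/

import Mathlib

open Matrix
open scoped BigOperators

/-- Frobenius norm of a real matrix. -/
noncomputable def frobNorm {α β : Type*} [Fintype α] [Fintype β] (A : Matrix α β ℝ) : ℝ :=
  Real.sqrt (∑ i, ∑ j, (A i j) ^ 2)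

namespace Stmt15Aux

variable {α β : Type*} [Fintype α] [Fintype β]

/-- squared Frobenius norm as a sum -/
noncomputable def q (A : Matrix α β ℝ) : ℝ := ∑ i, ∑ j, (A i j) ^ 2

lemma q_nonneg (A : Matrix α β ℝ) : 0 ≤ q A := by
  unfold q; positivity

lemma frob_sq (A : Matrix α β ℝ) : frobNorm A ^ 2 = q A := by
  unfold frobNorm q
  exact Real.sq_sqrt (by positivity)

lemma frob_nonneg (A : Matrix α β ℝ) : 0 ≤ frobNorm A := Real.sqrt_nonneg _

noncomputable def toE (A : Matrix α β ℝ) : EuclideanSpace ℝ (α × β) := WithLp.toLp 2 (fun p : α × β => A p.1 p.2)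

lemma frob_eq_norm (A : Matrix α β ℝ) : frobNorm A = ‖toE A‖ := by
  rw [EuclideanSpace.norm_eq]
  unfold frobNorm toE
  congr 1
  rw [Fintype.sum_prod_type]
  simp [sq_abs]

lemma frob_triangle (A B : Matrix α β ℝ) : frobNorm (A + B) ≤ frobNorm A + frobNorm B := by
  have h : toE (A + B) = toE A + toE B := by
    ext p; rfl
  rw [frob_eq_norm, frob_eq_norm, frob_eq_norm, h]
  exact norm_add_le _ _

lemma frob_neg (A : Matrix α β ℝ) : frobNorm (-A) = frobNorm A := by
  have h : toE (-A) = -toE A := by ext p; rfl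
  rw [frob_eq_norm, frob_eq_norm, h, norm_neg]

lemma frob_sub_le (A B : Matrix α β ℝ) : frobNorm (A - B) ≤ frobNorm A + frobNorm B := by
  rw [sub_eq_add_neg]
  calc frobNorm (A + -B) ≤ frobNorm A + frobNorm (-B) := frob_triangle _ _
  _ = frobNorm A + frobNorm B := by rw [frob_neg]

lemma frob_smul (c : ℝ) (A : Matrix α β ℝ) : frobNorm (c • A) = |c| * frobNorm A := by
  have h : toE (c • A) = c • toE A := by ext p; rfl
  rw [frob_eq_norm, frob_eq_norm, h, norm_smul]
  simp [Real.norm_eq_abs]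

/-- `‖AᵀA‖_F ≤ ‖A‖_F² = q A`. -/
lemma frob_transpose_mul_self_le (A : Matrix α β ℝ) : frobNorm (Aᵀ * A) ≤ q A := by
  have hqle : q (Aᵀ * A) ≤ (q A) ^ 2 := by
    have h1 : ∀ i j : β, ((Aᵀ * A) i j) ^ 2 ≤ (∑ k, A k i ^ 2) * (∑ k, A k j ^ 2) := by
      intro i j
      have : (Aᵀ * A) i j = ∑ k, A k i * A k j := by
        simp [Matrix.mul_apply, Matrix.transpose_apply]
      rw [this]
      exact Finset.sum_mul_sq_le_sq_mul_sq _ _ _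
    calc q (Aᵀ * A) = ∑ i, ∑ j, ((Aᵀ * A) i j) ^ 2 := rfl
    _ ≤ ∑ i : β, ∑ j : β, (∑ k, A k i ^ 2) * (∑ k, A k j ^ 2) := by
        apply Finset.sum_le_sum; intro i _
        apply Finset.sum_le_sum; intro j _
        exact h1 i j
    _ = (∑ i : β, ∑ k, A k i ^ 2) * (∑ j : β, ∑ k, A k j ^ 2) := by
        rw [Finset.sum_mul_sum]
    _ = (q A) ^ 2 := by
        have : (∑ i : β, ∑ k : α, A k i ^ 2) = q A := by
          rw [Finset.sum_comm]; rfl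
        rw [this]; ring
  have : frobNorm (Aᵀ * A) = Real.sqrt (q (Aᵀ * A)) := rfl
  rw [this]
  calc Real.sqrt (q (Aᵀ * A)) ≤ Real.sqrt ((q A) ^ 2) := Real.sqrt_le_sqrt hqle
  _ = q A := by rw [Real.sqrt_sq (q_nonneg A)]

lemma q_comb (a : ℝ) (U X : Matrix α β ℝ) :
    q (a • U + (1 - a) • X) = a * q U + (1 - a) * q X - a * (1 - a) * q (U - X) := by
  unfold q
  simp only [Matrix.add_apply, Matrix.smul_apply, Matrix.sub_apply, smul_eq_mul]
  have key : ∀ i j, (a * U i j + (1 - a) * X i j) ^ 2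
      = a * (U i j) ^ 2 + (1 - a) * (X i j) ^ 2 - a * (1 - a) * (U i j - X i j) ^ 2 := by
    intro i j; ring
  calc (∑ i, ∑ j, (a * U i j + (1 - a) * X i j) ^ 2)
      = ∑ i, ∑ j, (a * (U i j) ^ 2 + (1 - a) * (X i j) ^ 2
          - a * (1 - a) * (U i j - X i j) ^ 2) := by
        exact Finset.sum_congr rfl fun i _ => Finset.sum_congr rfl fun j _ => key i j
    _ = a * (∑ i, ∑ j, (U i j) ^ 2) + (1 - a) * (∑ i, ∑ j, (X i j) ^ 2)
          - a * (1 - a) * (∑ i, ∑ j, (U i j - X i j) ^ 2) := by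
        simp [Finset.sum_add_distrib, Finset.sum_sub_distrib, Finset.mul_sum]

end Stmt15Aux

open Stmt15Aux in
/-- The balancing regularizer `φ(U,V) = ‖UᵀU − VᵀV‖_F` is weakly convex with parameter 2:
`(U,V) ↦ φ(U,V) + ‖U‖_F² + ‖V‖_F²` is convex. (Within the proof of Proposition 4.2.) -/
theorem stmt15 {n₁ n₂ r : ℕ} :
    ConvexOn ℝ Set.univ
      (fun p : Matrix (Fin n₁) (Fin r) ℝ × Matrix (Fin n₂) (Fin r) ℝ =>
        frobNorm (p.1ᵀ * p.1 - p.2ᵀ * p.2) + (frobNorm p.1) ^ 2 + (frobNorm p.2) ^ 2) := by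
  constructor
  · exact convex_univ
  · rintro ⟨U, V⟩ - ⟨X, Y⟩ - a b ha hb hab
    have hb' : b = 1 - a := by linarith
    subst hb'
    simp only [Prod.smul_mk, Prod.mk_add_mk, smul_eq_mul]
    -- key matrix identity
    have hM : (a • U + (1 - a) • X)ᵀ * (a • U + (1 - a) • X)
            - (a • V + (1 - a) • Y)ᵀ * (a • V + (1 - a) • Y)
        = a • (Uᵀ * U - Vᵀ * V) + (1 - a) • (Xᵀ * X - Yᵀ * Y)
          - (a * (1 - a)) • ((U - X)ᵀ * (U - X) - (V - Y)ᵀ * (V - Y)) := by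
      simp only [Matrix.transpose_add, Matrix.transpose_smul, Matrix.transpose_sub,
        Matrix.add_mul, Matrix.mul_add, Matrix.sub_mul, Matrix.mul_sub,
        Matrix.smul_mul, Matrix.mul_smul, smul_smul, smul_sub, smul_add]
      module
    have h1 : frobNorm ((a • U + (1 - a) • X)ᵀ * (a • U + (1 - a) • X)
            - (a • V + (1 - a) • Y)ᵀ * (a • V + (1 - a) • Y))
        ≤ a * frobNorm (Uᵀ * U - Vᵀ * V) + (1 - a) * frobNorm (Xᵀ * X - Yᵀ * Y)
          + (a * (1 - a)) * frobNorm ((U - X)ᵀ * (U - X) - (V - Y)ᵀ * (V - Y)) := by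
      rw [hM]
      calc frobNorm (a • (Uᵀ * U - Vᵀ * V) + (1 - a) • (Xᵀ * X - Yᵀ * Y)
              - (a * (1 - a)) • ((U - X)ᵀ * (U - X) - (V - Y)ᵀ * (V - Y)))
          ≤ frobNorm (a • (Uᵀ * U - Vᵀ * V) + (1 - a) • (Xᵀ * X - Yᵀ * Y))
            + frobNorm ((a * (1 - a)) • ((U - X)ᵀ * (U - X) - (V - Y)ᵀ * (V - Y))) := frob_sub_le _ _
        _ ≤ frobNorm (a • (Uᵀ * U - Vᵀ * V)) + frobNorm ((1 - a) • (Xᵀ * X - Yᵀ * Y))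
            + frobNorm ((a * (1 - a)) • ((U - X)ᵀ * (U - X) - (V - Y)ᵀ * (V - Y))) := by
            have := frob_triangle (a • (Uᵀ * U - Vᵀ * V)) ((1 - a) • (Xᵀ * X - Yᵀ * Y))
            linarith
        _ = a * frobNorm (Uᵀ * U - Vᵀ * V) + (1 - a) * frobNorm (Xᵀ * X - Yᵀ * Y)
            + (a * (1 - a)) * frobNorm ((U - X)ᵀ * (U - X) - (V - Y)ᵀ * (V - Y)) := by
            rw [frob_smul, frob_smul, frob_smul, abs_of_nonneg ha, abs_of_nonneg hb,
              abs_of_nonneg (mul_nonneg ha hb)]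
    have h3 : frobNorm ((U - X)ᵀ * (U - X) - (V - Y)ᵀ * (V - Y)) ≤ q (U - X) + q (V - Y) := by
      calc frobNorm ((U - X)ᵀ * (U - X) - (V - Y)ᵀ * (V - Y)) ≤ frobNorm ((U - X)ᵀ * (U - X)) + frobNorm ((V - Y)ᵀ * (V - Y)) :=
            frob_sub_le _ _
        _ ≤ q (U - X) + q (V - Y) := add_le_add (frob_transpose_mul_self_le (U - X))
            (frob_transpose_mul_self_le (V - Y))
    have h3' : (a * (1 - a)) * frobNorm ((U - X)ᵀ * (U - X) - (V - Y)ᵀ * (V - Y)) ≤ (a * (1 - a)) * (q (U - X) + q (V - Y)) :=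
      mul_le_mul_of_nonneg_left h3 (mul_nonneg ha hb)
    have hqU := q_comb a U X
    have hqV := q_comb a V Y
    rw [frob_sq, frob_sq, frob_sq, frob_sq, frob_sq, frob_sq, hqU, hqV]
    linarith
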